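/- Global invariance of the low-order update: let B ⊆ ℝ^m be a convex set. Assume (a) U_j^n ∈ B for all j ∈ V; (b) Ū_ij ∈ B for all i ∈ V and all j ≠ i; (c) U_i^n + 2τ S(U_i^n) ∈ B for all i ∈ V; (d) min_{i∈V} (1 + 4τ d_ii/m_i) ≥ 0. Then U_i^{L,n+1} ∈ B for every i ∈ V. -/

import Mathlib

/-!
Solving the scheme for `U_i^{L,n+1}` and using `∑_j c_ij = 0` to write the flux sum as
`∑_{j ≠ i} (f(U_j) - f(U_i)) c_ij` gives
`U_i^{L,n+1} = ½ (U_i + 2τ S(U_i)) + ½ (U_i + ∑_{j ≠ i} (4τ d_ij / m_i) (Ū_ij - U_i))`.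
Under (d) the weights `4τ d_ij / m_i` are nonnegative with sum at most one, so the second bracket
is a convex combination of `U_i` and the bar states, and the whole update is the midpoint of two
points of `B`.
-/

open Finset

theorem Matrix.sum_mulVec_eq_sum_erase_sub_mulVec {ι m n R : Type*} [Fintype ι] [DecidableEq ι]
    [Fintype n] [CommRing R] (A : ι → Matrix m n R) {c : ι → n → R} (hc : ∑ j, c j = 0) (i : ι) :
    ∑ j, (A j).mulVec (c j) = ∑ j ∈ univ.erase i, (A j - A i).mulVec (c j) := by
  rw [sum_erase _ (by simp)]
  simp only [Matrix.sub_mulVec, sum_sub_distrib, ← Matrix.mulVec_sum, hc, Matrix.mulVec_zero,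
    sub_zero]

section

variable {E : Type*} [AddCommGroup E] [Module ℝ E]

theorem Convex.add_sum_smul_sub_mem {ι : Type*} {B : Set E} (hB : Convex ℝ B) {s : Finset ι}
    {x : E} {w : ι → ℝ} {z : ι → E} (hx : x ∈ B) (hz : ∀ j ∈ s, z j ∈ B)
    (hw : ∀ j ∈ s, 0 ≤ w j) (hw₁ : ∑ j ∈ s, w j ≤ 1) :
    x + ∑ j ∈ s, w j • (z j - x) ∈ B := by
  have hcombo : x + ∑ j ∈ s, w j • (z j - x)
      = ∑ o ∈ s.insertNone, o.elim (1 - ∑ j ∈ s, w j) w • o.elim x z := by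
    simp only [sum_insertNone, Option.elim_none, Option.elim_some, smul_sub, sum_sub_distrib,
      ← sum_smul]
    module
  rw [hcombo]
  refine hB.sum_mem ?_ (by simp [sum_insertNone]) ?_
  · rintro (_ | j) hj
    · simpa using hw₁
    · exact hw j (by simpa using hj)
  · rintro (_ | j) hj
    · exact hx
    · exact hz j (by simpa using hj)

/-- The bar state `Ū_ij` with `δ = d_ij`, `u = U_i`, `v = U_j` and `g = (f(U_j) - f(U_i)) c_ij`. -/
noncomputable def barState (δ : ℝ) (u v g : E) : E :=
  (1 / 2 : ℝ) • (u + v) - (1 / (2 * δ)) • g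

theorem smul_barState_sub {a δ : ℝ} (hδ : δ ≠ 0) (u v g : E) :
    (2 * a * δ) • (barState δ u v g - u) = a • (δ • (v - u) - g) := by
  rw [barState, smul_sub, smul_sub, smul_smul, smul_smul, smul_sub a, smul_smul]
  field_simp
  module

theorem eq_midpoint_of_lowOrder_step {ι : Type*} {s : Finset ι}
    {M τ : ℝ} (hM : M ≠ 0) (hτ : τ ≠ 0) {u ul src : E} {v g : ι → E} {δ : ι → ℝ}
    (hδ : ∀ j ∈ s, δ j ≠ 0)
    (hstep : (M / τ) • (ul - u) + ∑ j ∈ s, g j - ∑ j ∈ s, δ j • (v j - u) = M • src) :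
    ul = (1 / 2 : ℝ) • (u + (2 * τ) • src) + (1 / 2 : ℝ) • (u + ∑ j ∈ s, (4 * τ * δ j / M) •
      (barState (δ j) u (v j) (g j) - u)) := by
  have hterms : ∑ j ∈ s, (4 * τ * δ j / M) • (barState (δ j) u (v j) (g j) - u)
      = (2 * τ / M) • (∑ j ∈ s, δ j • (v j - u) - ∑ j ∈ s, g j) := by
    rw [← sum_sub_distrib, smul_sum]
    refine sum_congr rfl fun j hj => ?_
    rw [← smul_barState_sub (hδ j hj)]
    congr 1
    ring
  have hinc : (M / τ) • (ul - u) = M • src - ∑ j ∈ s, g j + ∑ j ∈ s, δ j • (v j - u) := by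
    rw [← hstep]
    abel
  have hinv : τ / M * (M / τ) = 1 := by field_simp
  have hul : ul = u + (τ / M) • (M • src - ∑ j ∈ s, g j + ∑ j ∈ s, δ j • (v j - u)) := by
    rw [← hinc, smul_smul, hinv, one_smul, add_sub_cancel]
  rw [hterms, hul, smul_add, smul_sub, smul_smul, div_mul_cancel₀ _ hM]
  module

end

theorem low_order_global_invariance_general
    (m d : ℕ)
    (V : Type) [Fintype V] [DecidableEq V]
    (M : V → ℝ) (hM : ∀ i, 0 < M i)
    (c : V → V → Fin d → ℝ)
    (hcsum : ∀ i, ∑ j, c i j = 0)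
    (f : (Fin m → ℝ) → Matrix (Fin m) (Fin d) ℝ)
    (S : (Fin m → ℝ) → (Fin m → ℝ))
    (dL : V → V → ℝ)
    (hdpos : ∀ i j, i ≠ j → 0 < dL i j)
    (U UL : V → Fin m → ℝ)
    (τ : ℝ) (hτ : 0 < τ)
    (hscheme : ∀ i, (M i / τ) • (UL i - U i) + ∑ j, (f (U j)).mulVec (c i j)
        - ∑ j ∈ univ.erase i, dL i j • (U j - U i) = M i • S (U i))
    (B : Set (Fin m → ℝ)) (hB : Convex ℝ B)
    (hU : ∀ j, U j ∈ B)
    (hbar : ∀ i, ∀ j ∈ univ.erase i,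
      (1/2 : ℝ) • (U i + U j)
        - (1 / (2 * dL i j)) • ((f (U j) - f (U i)).mulVec (c i j)) ∈ B)
    (hsrc : ∀ i, U i + (2 * τ) • S (U i) ∈ B)
    (hCFL : ∀ i, 0 ≤ 1 + 4 * τ * (-(∑ j ∈ univ.erase i, dL i j)) / M i) :
    ∀ i, UL i ∈ B := by
  intro i
  have hdL : ∀ j ∈ univ.erase i, 0 < dL i j := fun j hj => hdpos i j (ne_of_mem_erase hj).symm
  have hstep := hscheme i
  rw [Matrix.sum_mulVec_eq_sum_erase_sub_mulVec (fun j => f (U j)) (hcsum i) i] at hstep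
  rw [eq_midpoint_of_lowOrder_step (hM i).ne' hτ.ne' (fun j hj => (hdL j hj).ne') hstep]
  have hweights : ∑ j ∈ univ.erase i, 4 * τ * dL i j / M i ≤ 1 := by
    have hcfl := hCFL i
    rw [← sum_div, ← mul_sum]
    rw [mul_neg, neg_div] at hcfl
    linarith
  refine hB (hsrc i) (hB.add_sum_smul_sub_mem (hU i) (hbar i)
    (fun j hj => div_nonneg (by have := hdL j hj; positivity) (hM i).le) hweights)
    (by norm_num) (by norm_num) (by norm_num)

/-- Global invariance of the low-order update. -/
theorem low_order_global_invariance
    (m d : ℕ) (hm : 1 ≤ m) (hd : 1 ≤ d)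
    (V : Type) [Fintype V] [DecidableEq V]
    (M : V → ℝ) (hM : ∀ i, 0 < M i)
    (c : V → V → Fin d → ℝ)
    (hcskew : ∀ i j, c i j = - c j i)
    (hcsum : ∀ i, ∑ j, c i j = 0)
    (f : (Fin m → ℝ) → Matrix (Fin m) (Fin d) ℝ)
    (S : (Fin m → ℝ) → (Fin m → ℝ))
    (dL : V → V → ℝ)
    (hdsym : ∀ i j, i ≠ j → dL i j = dL j i)
    (hdpos : ∀ i j, i ≠ j → 0 < dL i j)
    (U UL : V → Fin m → ℝ)
    (τ : ℝ) (hτ : 0 < τ)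
    (hscheme : ∀ i, (M i / τ) • (UL i - U i) + ∑ j, (f (U j)).mulVec (c i j)
        - ∑ j ∈ univ.erase i, dL i j • (U j - U i) = M i • S (U i))
    (B : Set (Fin m → ℝ)) (hB : Convex ℝ B)
    (hU : ∀ j, U j ∈ B)
    (hbar : ∀ i, ∀ j ∈ univ.erase i,
      (1/2 : ℝ) • (U i + U j)
        - (1 / (2 * dL i j)) • ((f (U j) - f (U i)).mulVec (c i j)) ∈ B)
    (hsrc : ∀ i, U i + (2 * τ) • S (U i) ∈ B)
    (hCFL : ∀ i, 0 ≤ 1 + 4 * τ * (-(∑ j ∈ univ.erase i, dL i j)) / M i) :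
    ∀ i, UL i ∈ B :=
  low_order_global_invariance_general m d V M hM c hcsum f S dL hdpos U UL τ hτ hscheme B hB hU hbar
    hsrc hCFL
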